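/- arXiv:1008.3849 — 2 statements merged into one kernel-verified Lean document; each statement's English description precedes it below -/
import Mathlib

section
/- Let r_n → ∞ be a space scale such that m_n/n → ε for some ε ∈ [0,1] (covering the short, intermediate and extreme cases). Then α_n → α(ε) as n → ∞, and for each fixed v > 0 one has h_n(v)·v^{α_n} → 1 as n → ∞; in particular h_n(v) = v^{-α_n}(1 + o(1)) for each fixed v > 0. -/
open Filter MeasureTheory

/-- The standard Gaussian density `φ(x) = (2π)^{-1/2} e^{-x²/2}`. -/
noncomputable def phi (x : ℝ) : ℝ := (Real.sqrt (2 * Real.pi))⁻¹ * Real.exp (-x ^ 2 / 2)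

/-- The standard Gaussian distribution function `Φ(x) = ∫_{-∞}^x φ(y) dy`. -/
noncomputable def Phi (x : ℝ) : ℝ := ∫ y in Set.Iic x, phi y

/-!
Put `x_n = log r_n / (β √n)` and let `T = 1 - Φ` be the Gaussian tail, so that `T x_n = 1 / b_n`
and hence `x_n → ∞`, while `B_n` is defined by `φ(B_n) / B_n = T x_n`. Mills' bounds
`φ(x) / (x (1 + x⁻²)) ≤ T x ≤ φ(x) / x` force `0 ≤ B_n - x_n ≤ x_n⁻³`. Taking logarithms in
`b_n = B_n / φ(B_n)` gives `2 log b_n ~ B_n²`, so `B_n² / n → 2 ε log 2`: this is `α_n → α(ε)`.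
For the second claim, with `δ_n = log v / (β √n) → 0`,
`h_n(v) v^{α_n} = T(x_n + δ_n) e^{B_n δ_n} / T(x_n)`. Writing `T t = R(t) φ(t) / t` with the
Mills ratio `R → 1`, this is `R(x_n + δ_n) / R(x_n) · x_n / (x_n + δ_n) · e^{(B_n - x_n) δ_n - δ_n² / 2}`,
and every factor tends to `1`.
-/

open Real Set Topology Asymptotics ProbabilityTheory

lemma phi_eq_gaussianPDFReal : phi = gaussianPDFReal 0 1 := by
  ext x
  simp [phi, gaussianPDFReal]

lemma phi_pos (x : ℝ) : 0 < phi x :=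
  phi_eq_gaussianPDFReal ▸ gaussianPDFReal_pos 0 1 x one_ne_zero

lemma integrable_phi : Integrable phi :=
  phi_eq_gaussianPDFReal ▸ integrable_gaussianPDFReal 0 1

lemma integral_phi : ∫ x, phi x = 1 :=
  phi_eq_gaussianPDFReal ▸ integral_gaussianPDFReal_eq_one 0 one_ne_zero

lemma phi_add (x δ : ℝ) : phi (x + δ) = phi x * exp (-(x * δ) - δ ^ 2 / 2) := by
  rw [phi, phi, mul_assoc, ← exp_add]
  ring_nf

lemma log_div_phi {t : ℝ} (ht : 0 < t) :
    log (t / phi t) = t ^ 2 / 2 + log t + log (√(2 * π)) := by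
  rw [log_div ht.ne' (phi_pos t).ne', phi, log_mul (by positivity) (exp_ne_zero _), log_inv,
    log_exp]
  ring

lemma hasDerivAt_phi (x : ℝ) : HasDerivAt phi (-x * phi x) x := by
  have h : HasDerivAt (fun x : ℝ => -x ^ 2 / 2) (-x) x :=
    ((hasDerivAt_pow 2 x).neg.div_const 2).congr_deriv (by push_cast; ring)
  refine (h.exp.const_mul (√(2 * π))⁻¹).congr_deriv ?_
  simp only [phi]
  ring

lemma tendsto_phi_atTop : Tendsto phi atTop (𝓝 0) := by
  have hexponent : Tendsto (fun x : ℝ => -x ^ 2 / 2) atTop atBot :=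
    (tendsto_neg_atTop_atBot.comp (tendsto_pow_atTop two_ne_zero)).atBot_div_const two_pos
  have h := (tendsto_exp_atBot.comp hexponent).const_mul (√(2 * π))⁻¹
  rw [mul_zero] at h
  exact h

lemma isEquivalent_two_mul_log_div_phi :
    (fun t => 2 * log (t / phi t)) ~[atTop] fun t => t ^ 2 := by
  have hlog : (fun t => 2 * log t + 2 * log (√(2 * π))) =o[atTop] fun t : ℝ => t ^ 2 := by
    have hid : (id : ℝ → ℝ) =o[atTop] fun t => t ^ 2 :=
      (isLittleO_pow_pow_atTop_of_lt (𝕜 := ℝ) one_lt_two).congr_left pow_one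
    exact ((isLittleO_log_id_atTop.trans hid).const_mul_left 2).add
      ((isLittleO_const_id_atTop _).trans hid)
  refine (hlog.add_isEquivalent IsEquivalent.refl).congr_left ?_
  filter_upwards [eventually_gt_atTop 0] with t ht
  simp only [Pi.add_apply, log_div_phi ht]
  ring

noncomputable def phiTail (x : ℝ) : ℝ := ∫ y in Ioi x, phi y

lemma one_sub_Phi (x : ℝ) : 1 - Phi x = phiTail x := by
  rw [← integral_phi, ← intervalIntegral.integral_Iic_add_Ioi integrable_phi.integrableOn
    integrable_phi.integrableOn, Phi, phiTail, add_sub_cancel_left]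

lemma phiTail_pos (x : ℝ) : 0 < phiTail x := by
  rw [phiTail, setIntegral_pos_iff_support_of_nonneg_ae
    (ae_of_all _ fun y => (phi_pos y).le) integrable_phi.integrableOn]
  simp [Function.support, (phi_pos _).ne']

lemma phiTail_antitone : Antitone phiTail := fun _ _ hxy =>
  setIntegral_mono_set integrable_phi.integrableOn (ae_of_all _ fun y => (phi_pos y).le)
    (Ioi_subset_Ioi hxy).eventuallyLE

lemma hasDerivAt_neg_phi_div {t : ℝ} (ht : t ≠ 0) :
    HasDerivAt (fun t => -(phi t / t)) (phi t + phi t / t ^ 2) t := by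
  refine ((hasDerivAt_phi t).div (hasDerivAt_id t) ht).neg.congr_deriv ?_
  simp only [id]
  field_simp
  ring

lemma phiTail_add_integral_phi_div_sq {a : ℝ} (ha : 0 < a) :
    IntegrableOn (fun t => phi t / t ^ 2) (Ioi a) ∧
      phiTail a + ∫ t in Ioi a, phi t / t ^ 2 = phi a / a := by
  have hderiv : ∀ t ∈ Ici a, HasDerivAt (fun t => -(phi t / t)) (phi t + phi t / t ^ 2) t :=
    fun t ht => hasDerivAt_neg_phi_div (ha.trans_le ht).ne'
  have hnonneg : ∀ t ∈ Ioi a, 0 ≤ phi t + phi t / t ^ 2 := fun t _ => by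
    have := phi_pos t
    positivity
  have hlim : Tendsto (fun t => -(phi t / t)) atTop (𝓝 0) := by
    simpa [div_eq_mul_inv] using (tendsto_phi_atTop.mul tendsto_inv_atTop_zero).neg
  have hint := integrableOn_Ioi_deriv_of_nonneg' hderiv hnonneg hlim
  have hint' : IntegrableOn (fun t => phi t / t ^ 2) (Ioi a) := by
    refine (hint.sub integrable_phi.integrableOn).congr_fun (fun t _ => ?_) measurableSet_Ioi
    simp
  refine ⟨hint', ?_⟩
  rw [phiTail, ← integral_add integrable_phi.integrableOn hint',
    integral_Ioi_of_hasDerivAt_of_nonneg' hderiv hnonneg hlim]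
  ring

lemma phiTail_le_phi_div {a : ℝ} (ha : 0 < a) : phiTail a ≤ phi a / a := by
  obtain ⟨-, h⟩ := phiTail_add_integral_phi_div_sq ha
  have : 0 ≤ ∫ t in Ioi a, phi t / t ^ 2 :=
    setIntegral_nonneg measurableSet_Ioi fun t _ => div_nonneg (phi_pos t).le (sq_nonneg t)
  linarith

lemma phi_div_le_phiTail {a : ℝ} (ha : 0 < a) : phi a / a ≤ (1 + (a ^ 2)⁻¹) * phiTail a := by
  obtain ⟨hint, h⟩ := phiTail_add_integral_phi_div_sq ha
  have hle : ∫ t in Ioi a, phi t / t ^ 2 ≤ (a ^ 2)⁻¹ * phiTail a := by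
    rw [phiTail, ← integral_const_mul]
    refine setIntegral_mono_on hint (integrable_phi.integrableOn.const_mul _) measurableSet_Ioi
      fun t ht => ?_
    rw [div_eq_inv_mul]
    gcongr
    · exact (phi_pos t).le
    · exact ht.le
  linarith

noncomputable def millsRatio (t : ℝ) : ℝ := t * phiTail t / phi t

lemma phiTail_eq_millsRatio_mul {t : ℝ} (ht : t ≠ 0) : phiTail t = millsRatio t * phi t / t := by
  have := (phi_pos t).ne'
  rw [millsRatio]
  field_simp

lemma tendsto_millsRatio_atTop : Tendsto millsRatio atTop (𝓝 1) := by
  have hlower : Tendsto (fun t : ℝ => (1 + (t ^ 2)⁻¹)⁻¹) atTop (𝓝 1) := by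
    simpa using ((tendsto_pow_atTop (α := ℝ) two_ne_zero).inv_tendsto_atTop.const_add 1).inv₀
      (by norm_num)
  refine tendsto_of_tendsto_of_tendsto_of_le_of_le' hlower tendsto_const_nhds ?_ ?_
  all_goals filter_upwards [eventually_gt_atTop 0] with t ht
  · have h := phi_div_le_phiTail ht
    rw [div_le_iff₀ ht] at h
    rw [millsRatio, inv_le_iff_one_le_mul₀ (by positivity), div_mul_eq_mul_div,
      one_le_div (phi_pos t)]
    linarith
  · rw [millsRatio, div_le_one (phi_pos t), ← le_div_iff₀' ht]
    exact phiTail_le_phi_div ht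

section Sequences

variable {ι : Type*} {l : Filter ι}

lemma tendsto_atTop_of_tendsto_phiTail {x : ι → ℝ}
    (h : Tendsto (fun i => phiTail (x i)) l (𝓝 0)) : Tendsto x l atTop := by
  refine tendsto_atTop.2 fun M => ?_
  filter_upwards [h.eventually_lt_const (phiTail_pos M)] with i hi
  by_contra! hlt
  exact (phiTail_antitone hlt.le).not_gt hi

lemma sub_mem_Icc_of_phi_div_eq_phiTail {x B : ℝ} (hx : 0 < x) (hB : 0 < B)
    (h : phi B / B = phiTail x) : B - x ∈ Icc 0 (x ^ 3)⁻¹ := by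
  have hxB : x ≤ B := by
    by_contra! hBx
    have hphi : phi x < phi B := by
      rw [phi, phi]
      gcongr
    have := phi_pos B
    have : phi x / x < phi B / B := calc
      phi x / x < phi B / x := by gcongr
      _ < phi B / B := by gcongr
    linarith [phiTail_le_phi_div hx]
  refine ⟨sub_nonneg.2 hxB, ?_⟩
  -- Since `φ B = φ x · exp (-(B² - x²)/2)`, this says `(B² - x²)/2 ≤ x⁻²`, so `x (B - x) ≤ x⁻²`.
  have hmills : phi x ≤ exp ((x ^ 2)⁻¹) * phi B := by
    have h1 := phi_div_le_phiTail hx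
    rw [← h, div_le_iff₀ hx] at h1
    have hle : phi B / B * x ≤ phi B := by
      rw [div_mul_eq_mul_div, div_le_iff₀ hB]
      exact mul_le_mul_of_nonneg_left hxB (phi_pos B).le
    calc phi x ≤ (1 + (x ^ 2)⁻¹) * (phi B / B * x) := by linarith
      _ ≤ exp ((x ^ 2)⁻¹) * phi B :=
        mul_le_mul (by linarith [add_one_le_exp (x ^ 2)⁻¹]) hle
          (mul_nonneg (div_nonneg (phi_pos B).le hB.le) hx.le) (exp_pos _).le
  rw [show B = x + (B - x) by ring, phi_add, ← mul_assoc, mul_comm (exp _), mul_assoc,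
    ← exp_add] at hmills
  have hexp : 0 ≤ (x ^ 2)⁻¹ + (-(x * (B - x)) - (B - x) ^ 2 / 2) :=
    one_le_exp_iff.1 ((le_mul_iff_one_le_right (phi_pos x)).1 hmills)
  rw [show (x ^ 3)⁻¹ = (x ^ 2)⁻¹ / x by ring, le_div_iff₀' hx]
  nlinarith [sq_nonneg (B - x)]

lemma tendsto_sub_of_phi_div_eq_phiTail {x B : ι → ℝ} (hx : Tendsto x l atTop)
    (hB : ∀ i, 0 < B i) (h : ∀ i, phi (B i) / B i = phiTail (x i)) :
    Tendsto (fun i => B i - x i) l (𝓝 0) := by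
  have hupper : Tendsto (fun i => (x i ^ 3)⁻¹) l (𝓝 0) :=
    (tendsto_pow_atTop three_ne_zero).comp hx |>.inv_tendsto_atTop
  refine tendsto_of_tendsto_of_tendsto_of_le_of_le' tendsto_const_nhds hupper ?_ ?_
  all_goals filter_upwards [hx.eventually_gt_atTop 0] with i hi
  exacts [(sub_mem_Icc_of_phi_div_eq_phiTail hi (hB i) (h i)).1,
    (sub_mem_Icc_of_phi_div_eq_phiTail hi (hB i) (h i)).2]

lemma tendsto_sq_div_of_mul_phi_eq {b B s : ι → ℝ} {L : ℝ} (hB_top : Tendsto B l atTop)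
    (hB : ∀ i, b i * phi (B i) = B i) (hb : Tendsto (fun i => log (b i) / s i) l (𝓝 L)) :
    Tendsto (fun i => B i ^ 2 / s i) l (𝓝 (2 * L)) := by
  have hequiv := (isEquivalent_two_mul_log_div_phi.comp_tendsto hB_top).div
    (IsEquivalent.refl (u := s))
  refine hequiv.tendsto_nhds ((hb.const_mul 2).congr fun i => ?_)
  rw [Pi.div_apply, Function.comp_apply, ← eq_div_of_mul_eq (phi_pos _).ne' (hB i), mul_div_assoc]

lemma tendsto_phiTail_add_div_mul_exp {x δ B : ι → ℝ} (hx : Tendsto x l atTop)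
    (hδ : Tendsto δ l (𝓝 0)) (hBx : Tendsto (fun i => B i - x i) l (𝓝 0)) :
    Tendsto (fun i => phiTail (x i + δ i) / phiTail (x i) * exp (B i * δ i)) l (𝓝 1) := by
  have hy : Tendsto (fun i => x i + δ i) l atTop := hx.atTop_add hδ
  have hratio : Tendsto (fun i => millsRatio (x i + δ i) / millsRatio (x i)) l (𝓝 1) := by
    have h := (tendsto_millsRatio_atTop.comp hy).div (tendsto_millsRatio_atTop.comp hx) one_ne_zero
    rwa [div_one] at h
  have hfrac : Tendsto (fun i => 1 - δ i * (x i + δ i)⁻¹) l (𝓝 1) := by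
    simpa using (hδ.mul hy.inv_tendsto_atTop).const_sub 1
  have hexp : Tendsto (fun i => exp ((B i - x i) * δ i - δ i ^ 2 / 2)) l (𝓝 1) := by
    refine tendsto_exp_nhds_zero_nhds_one.comp ?_
    simpa using (hBx.mul hδ).sub ((hδ.pow 2).div_const 2)
  refine Tendsto.congr' ?_ (by simpa using (hratio.mul hfrac).mul hexp)
  filter_upwards [hx.eventually_gt_atTop 0, hy.eventually_gt_atTop 0] with i hxi hyi
  rw [phiTail_eq_millsRatio_mul hxi.ne', phiTail_eq_millsRatio_mul hyi.ne', phi_add]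
  have := phi_pos (x i)
  have : 0 < millsRatio (x i) := by
    rw [millsRatio]
    have := phiTail_pos (x i)
    positivity
  have hexp_add : exp (B i * δ i) * exp (-(x i * δ i) - δ i ^ 2 / 2) =
      exp ((B i - x i) * δ i - δ i ^ 2 / 2) := by
    rw [← exp_add]
    ring_nf
  rw [← hexp_add]
  field_simp
  ring

end Sequences

theorem hn_asymptotics_general (β : ℝ) (ε : ℝ)
    (r b B : ℕ → ℝ)
    (hr : Tendsto r atTop atTop)
    (hb_def : ∀ n : ℕ, b n * (1 - Phi (Real.log (r n) / (β * Real.sqrt n))) = 1)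
    (hb : Tendsto b atTop atTop)
    (hB_pos : ∀ n, 0 < B n)
    (hB : ∀ n, b n * phi (B n) = B n)
    (hm : Tendsto (fun n : ℕ => (Real.log (b n) / Real.log 2) / n) atTop (nhds ε)) :
    Tendsto (fun n : ℕ => B n / (β * Real.sqrt n)) atTop
      (nhds (Real.sqrt (2 * ε * Real.log 2) / β)) ∧
    ∀ v : ℝ, 0 < v →
      Tendsto (fun n : ℕ =>
          b n * (1 - Phi (Real.log (r n * v) / (β * Real.sqrt n)))
            * v ^ (B n / (β * Real.sqrt n)))
        atTop (nhds 1) := by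
  set x : ℕ → ℝ := fun n => log (r n) / (β * √n)
  have hTx (n : ℕ) : phiTail (x n) = (b n)⁻¹ :=
    eq_inv_of_mul_eq_one_right (one_sub_Phi (x n) ▸ hb_def n)
  have hx : Tendsto x atTop atTop :=
    tendsto_atTop_of_tendsto_phiTail (hb.inv_tendsto_atTop.congr fun n => (hTx n).symm)
  have hBx : Tendsto (fun n => B n - x n) atTop (𝓝 0) :=
    tendsto_sub_of_phi_div_eq_phiTail hx hB_pos fun n => by
      rw [hTx, eq_div_of_mul_eq (phi_pos _).ne' (hB n), inv_div]
  refine ⟨?_, fun v hv => ?_⟩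
  · have hlogb : Tendsto (fun n : ℕ => log (b n) / n) atTop (𝓝 (ε * log 2)) :=
      (hm.mul_const (log 2)).congr fun n => by field_simp
    have hB_top : Tendsto B atTop atTop := (hx.atTop_add hBx).congr fun n => by ring
    have hBsq := tendsto_sq_div_of_mul_phi_eq hB_top hB hlogb
    rw [← mul_assoc] at hBsq
    refine (((continuous_sqrt.tendsto _).comp hBsq).div_const β).congr fun n => ?_
    rw [Function.comp_apply, sqrt_div (sq_nonneg _), sqrt_sq (hB_pos n).le]
    ring
  · have hδ : Tendsto (fun n : ℕ => log v / (β * √n)) atTop (𝓝 0) := by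
      have h := (tendsto_sqrt_atTop.comp tendsto_natCast_atTop_atTop).inv_tendsto_atTop.const_mul
        (log v / β)
      rw [mul_zero] at h
      exact h.congr fun n => by simp only [Pi.inv_apply, Function.comp_apply]; ring
    refine (tendsto_phiTail_add_div_mul_exp hx hδ hBx).congr' ?_
    filter_upwards [hr.eventually_gt_atTop 0] with n hrn
    rw [hTx, one_sub_Phi, log_mul hrn.ne' hv.ne', add_div, rpow_def_of_pos hv, div_inv_eq_mul,
      mul_comm (phiTail _)]
    congr 2
    ring

/-- Let `r_n → ∞` with `m_n/n → ε ∈ [0,1]`, where `b_n (1 - Φ(log r_n/(β√n))) = 1`,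
`m_n = log b_n / log 2`, `b_n → ∞`, `B_n > 0` solves `b_n φ(B_n) = B_n`, and
`α_n = B_n/(β√n)`.  Then `α_n → α(ε) = √(2ε log 2)/β` and, for each fixed `v > 0`,
`h_n(v) v^{α_n} → 1` where `h_n(v) = b_n (1 - Φ(log(r_n v)/(β√n)))`. -/
theorem hn_asymptotics (β : ℝ) (hβ : 0 < β) (ε : ℝ) (hε0 : 0 ≤ ε) (hε1 : ε ≤ 1)
    (r b B : ℕ → ℝ)
    (hr : Tendsto r atTop atTop)
    (hb_def : ∀ n : ℕ, b n * (1 - Phi (Real.log (r n) / (β * Real.sqrt n))) = 1)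
    (hb : Tendsto b atTop atTop)
    (hB_pos : ∀ n, 0 < B n)
    (hB : ∀ n, b n * phi (B n) = B n)
    (hm : Tendsto (fun n : ℕ => (Real.log (b n) / Real.log 2) / n) atTop (nhds ε)) :
    Tendsto (fun n : ℕ => B n / (β * Real.sqrt n)) atTop
      (nhds (Real.sqrt (2 * ε * Real.log 2) / β)) ∧
    ∀ v : ℝ, 0 < v →
      Tendsto (fun n : ℕ =>
          b n * (1 - Phi (Real.log (r n * v) / (β * Real.sqrt n)))
            * v ^ (B n / (β * Real.sqrt n)))
        atTop (nhds 1) :=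
  hn_asymptotics_general β ε r b B hr hb_def hb hB_pos hB hm
end

section
/- There exists a constant 0 < c < ∞ such that for all n ≥ 1, all integers m with 1 ≤ m ≤ n², and all z ∈ V_n, one has Σ_{l=1}^{2m} Q_n^{l+2}(z,z) ≤ c/n². -/
open Filter

/-- The vertex set of the `n`-dimensional discrete cube. -/
abbrev V (n : ℕ) := Fin n → Bool

/-- The one-step transition matrix of the simple random walk on `V n`. -/
noncomputable def Q (n : ℕ) : Matrix (V n) (V n) ℝ :=
  fun x y => if hammingDist x y = 1 then (n : ℝ)⁻¹ else 0

namespace SRW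


noncomputable def sg (b : Bool) : ℝ := if b then 1 else -1

noncomputable def chi {n : ℕ} (S : Finset (Fin n)) (x : V n) : ℝ :=
  ∏ i ∈ S, sg (x i)

noncomputable def lam (n : ℕ) (S : Finset (Fin n)) : ℝ :=
  ((n : ℝ) - 2 * S.card) / n

lemma sg_sq (b : Bool) : sg b * sg b = 1 := by cases b <;> simp [sg]

lemma chi_mul_self {n} (S : Finset (Fin n)) (x : V n) : chi S x * chi S x = 1 := by
  rw [chi, ← Finset.prod_mul_distrib]
  exact Finset.prod_eq_one fun i _ => sg_sq _

lemma sg_not (b : Bool) : sg (!b) = - sg b := by cases b <;> simp [sg]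

lemma chi_update {n} (S : Finset (Fin n)) (x : V n) (i : Fin n) :
    chi S (Function.update x i (!x i)) = (if i ∈ S then -1 else 1) * chi S x := by
  by_cases h : i ∈ S
  · rw [chi, ← Finset.mul_prod_erase _ _ h, if_pos h, chi, ← Finset.mul_prod_erase _ _ h]
    have he : ∏ j ∈ S.erase i, sg (Function.update x i (!x i) j)
        = ∏ j ∈ S.erase i, sg (x j) :=
      Finset.prod_congr rfl fun j hj => by
        rw [Function.update_of_ne (Finset.ne_of_mem_erase hj)]
    rw [he, Function.update_self, sg_not]; ring
  · rw [if_neg h, one_mul, chi, chi]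
    refine Finset.prod_congr rfl fun j hj => ?_
    have hji : j ≠ i := by rintro rfl; exact h hj
    rw [Function.update_of_ne hji]

lemma dist_one_filter {n} (x : V n) :
    Finset.univ.filter (fun w => hammingDist x w = 1)
      = Finset.image (fun i => Function.update x i (!x i)) Finset.univ := by
  ext w
  simp only [Finset.mem_filter, Finset.mem_univ, true_and, Finset.mem_image]
  constructor
  · intro h
    rw [hammingDist, Finset.card_eq_one] at h
    obtain ⟨i, hi⟩ := h
    have hmem : ∀ j : Fin n, x j ≠ w j ↔ j = i := by
      intro j
      constructor
      · intro hj
        have : j ∈ Finset.univ.filter (fun j => x j ≠ w j) := by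
          simp [hj]
        rw [hi, Finset.mem_singleton] at this; exact this
      · intro hj
        have : j ∈ Finset.univ.filter (fun j => x j ≠ w j) := by
          rw [hi, Finset.mem_singleton]; exact hj
        simpa using this
    refine ⟨i, funext fun j => ?_⟩
    by_cases hj : j = i
    · subst hj
      have hne : x j ≠ w j := (hmem j).2 rfl
      rw [Function.update_self]
      revert hne; cases x j <;> cases w j <;> simp
    · rw [Function.update_of_ne hj]
      by_contra hne
      exact hj ((hmem j).1 hne)
  · rintro ⟨i, rfl⟩
    rw [hammingDist, Finset.card_eq_one]
    refine ⟨i, ?_⟩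
    ext j
    simp only [Finset.mem_filter, Finset.mem_univ, true_and, Finset.mem_singleton]
    by_cases hj : j = i
    · subst hj
      rw [Function.update_self]
      cases x j <;> simp
    · rw [Function.update_of_ne hj]
      simp [hj]

lemma update_inj {n} (x : V n) :
    ∀ i ∈ Finset.univ, ∀ j ∈ Finset.univ,
      Function.update x i (!x i) = Function.update x j (!x j) → i = j := by
  intro i _ j _ hij
  by_contra hne
  have := congrFun hij i
  rw [Function.update_self, Function.update_of_ne hne] at this
  revert this; cases x i <;> simp

lemma Q_mul_chi {n} (x : V n) (S : Finset (Fin n)) :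
    ∑ w : V n, Q n x w * chi S w = lam n S * chi S x := by
  calc ∑ w : V n, Q n x w * chi S w
      = ∑ w ∈ Finset.univ.filter (fun w => hammingDist x w = 1), (n:ℝ)⁻¹ * chi S w := by
        rw [Finset.sum_filter]
        refine Finset.sum_congr rfl fun w _ => ?_
        rw [Q]; split <;> simp
    _ = ∑ i : Fin n, (n:ℝ)⁻¹ * chi S (Function.update x i (!x i)) := by
        rw [dist_one_filter, Finset.sum_image (update_inj x)]
    _ = (n:ℝ)⁻¹ * (((n:ℝ) - 2*S.card) * chi S x) := by
        simp only [chi_update, ← Finset.mul_sum]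
        congr 1
        rw [← Finset.sum_mul]
        congr 1
        have : ∀ i : Fin n, (if i ∈ S then (-1:ℝ) else 1) = (if i ∈ S then (-2:ℝ) else 0) + 1 := by
          intro i; split <;> ring
        simp only [this, Finset.sum_add_distrib, Finset.sum_ite_mem, Finset.univ_inter,
          Finset.sum_const, Finset.sum_const, Finset.card_univ, Fintype.card_fin]
        push_cast; ring
    _ = lam n S * chi S x := by rw [lam]; ring

lemma spectral {n} (p : ℕ) (x y : V n) :
    (Q n ^ p) x y = ((2:ℝ)^n)⁻¹ * ∑ S : Finset (Fin n), (lam n S)^p * (chi S x * chi S y) := by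
  induction p generalizing x with
  | zero =>
    simp only [pow_zero, Matrix.one_apply, one_mul]
    have key : ∑ S : Finset (Fin n), chi S x * chi S y
        = ∏ i : Fin n, (sg (x i) * sg (y i) + 1) := by
      rw [Fintype.prod_add]
      refine (Finset.sum_congr rfl fun S _ => ?_).symm
      rw [Finset.prod_const_one, mul_one, chi, chi, Finset.prod_mul_distrib]
    rw [key]
    by_cases hxy : x = y
    · subst hxy
      simp only [if_pos rfl, sg_sq]
      norm_num
    · rw [if_neg hxy]
      obtain ⟨i, hi⟩ := Function.ne_iff.1 hxy
      rw [Finset.prod_eq_zero (Finset.mem_univ i), mul_zero]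
      revert hi; cases x i <;> cases y i <;> simp [sg]
  | succ p ih =>
    rw [pow_succ', Matrix.mul_apply]
    calc ∑ w : V n, Q n x w * (Q n ^ p) w y
        = ∑ w : V n, ∑ S : Finset (Fin n),
            ((2:ℝ)^n)⁻¹ * ((lam n S)^p * chi S y) * (Q n x w * chi S w) := by
          refine Finset.sum_congr rfl fun w _ => ?_
          rw [ih, Finset.mul_sum, Finset.mul_sum]
          exact Finset.sum_congr rfl fun S _ => by ring
      _ = ∑ S : Finset (Fin n),
            ((2:ℝ)^n)⁻¹ * ((lam n S)^p * chi S y) * ∑ w : V n, Q n x w * chi S w := by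
          rw [Finset.sum_comm]
          exact Finset.sum_congr rfl fun S _ => by rw [Finset.mul_sum]
      _ = ((2:ℝ)^n)⁻¹ * ∑ S : Finset (Fin n), (lam n S)^(p+1) * (chi S x * chi S y) := by
          simp only [Q_mul_chi]
          rw [Finset.mul_sum]
          exact Finset.sum_congr rfl fun S _ => by rw [pow_succ]; ring



/-- Pascal shift identity for moment sums. -/
lemma pascal_shift (p N : ℕ) :
    ∑ k ∈ Finset.range (N+2), ((N+1).choose k : ℝ) * (((N:ℝ)+1) - 2*k)^p
      = ∑ k ∈ Finset.range (N+1), (N.choose k : ℝ)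
          * ((((N:ℝ) - 2*k) + 1)^p + (((N:ℝ) - 2*k) - 1)^p) := by
  have e1 := Finset.sum_range_succ' (fun k => ((N+1).choose k : ℝ) * (((N:ℝ)+1) - 2*k)^p) (N+1)
  have e2 := Finset.sum_range_succ' (fun k => (N.choose k : ℝ) * (((N:ℝ)+1) - 2*k)^p) (N+1)
  have e3 := Finset.sum_range_succ (fun k => (N.choose k : ℝ) * (((N:ℝ)+1) - 2*k)^p) (N+1)
  have c1 : ∀ k ∈ Finset.range (N+1),
      ((N+1).choose (k+1) : ℝ) * (((N:ℝ)+1) - 2*((k+1:ℕ):ℝ))^p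
        = (N.choose k : ℝ) * (((N:ℝ) - 2*k) - 1)^p
          + (N.choose (k+1) : ℝ) * (((N:ℝ)+1) - 2*((k+1:ℕ):ℝ))^p := by
    intro k _
    rw [Nat.choose_succ_succ]
    push_cast
    ring
  rw [e1, Finset.sum_congr rfl c1, Finset.sum_add_distrib]
  have hD : ∑ k ∈ Finset.range (N+1), (N.choose (k+1) : ℝ) * (((N:ℝ)+1) - 2*((k+1:ℕ):ℝ))^p
      = ∑ k ∈ Finset.range (N+1), (N.choose k : ℝ) * (((N:ℝ)+1) - 2*k)^p
        - (N.choose 0 : ℝ) * (((N:ℝ)+1) - 2*((0:ℕ):ℝ))^p := by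
    have h5 : ∑ k ∈ Finset.range (N+2), (N.choose k : ℝ) * (((N:ℝ)+1) - 2*k)^p
        = ∑ k ∈ Finset.range (N+1), (N.choose k : ℝ) * (((N:ℝ)+1) - 2*k)^p := by
      rw [e3, Nat.choose_succ_self]
      simp
    rw [e2] at h5
    linarith [h5]
  have c2 : ∀ k ∈ Finset.range (N+1),
      (N.choose k : ℝ) * (((N:ℝ)+1) - 2*k)^p
        = (N.choose k : ℝ) * (((N:ℝ) - 2*k) + 1)^p := by
    intro k _; ring_nf
  have c3 : ∀ k ∈ Finset.range (N+1),
      (N.choose k : ℝ) * ((((N:ℝ) - 2*k) + 1)^p + (((N:ℝ) - 2*k) - 1)^p)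
        = (N.choose k : ℝ) * (((N:ℝ) - 2*k) + 1)^p
          + (N.choose k : ℝ) * (((N:ℝ) - 2*k) - 1)^p := by
    intro k _; ring
  rw [hD, Finset.sum_congr rfl c3, Finset.sum_add_distrib, Finset.sum_congr rfl c2]
  push_cast [Nat.choose_zero_right]
  ring

lemma choose_sum (N : ℕ) : ∑ k ∈ Finset.range (N+1), (N.choose k : ℝ) = 2^N := by
  rw [← Nat.cast_sum, Nat.sum_range_choose]
  push_cast; ring

lemma moment2 (N : ℕ) :
    ∑ k ∈ Finset.range (N+1), (N.choose k : ℝ) * ((N:ℝ) - 2*k)^2 = (N:ℝ) * 2^N := by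
  induction N with
  | zero => norm_num
  | succ N ih =>
    have hps := pascal_shift 2 N
    rw [show N+1+1 = N+2 from rfl]
    push_cast
    rw [hps]
    have expand : ∀ k ∈ Finset.range (N+1), (N.choose k : ℝ)
        * ((((N:ℝ) - 2*k) + 1)^2 + (((N:ℝ) - 2*k) - 1)^2)
        = 2 * ((N.choose k : ℝ) * ((N:ℝ) - 2*k)^2) + 2 * (N.choose k : ℝ) := by
      intro k _; ring
    rw [Finset.sum_congr rfl expand, Finset.sum_add_distrib, ← Finset.mul_sum, ← Finset.mul_sum,
      ih, choose_sum]
    ring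

lemma moment4 (N : ℕ) :
    ∑ k ∈ Finset.range (N+1), (N.choose k : ℝ) * ((N:ℝ) - 2*k)^4 ≤ 3 * (N:ℝ)^2 * 2^N := by
  induction N with
  | zero => norm_num
  | succ N ih =>
    have hps := pascal_shift 4 N
    rw [show N+1+1 = N+2 from rfl]
    push_cast
    rw [hps]
    have expand : ∀ k ∈ Finset.range (N+1), (N.choose k : ℝ)
        * ((((N:ℝ) - 2*k) + 1)^4 + (((N:ℝ) - 2*k) - 1)^4)
        = 2 * ((N.choose k : ℝ) * ((N:ℝ) - 2*k)^4)
          + 12 * ((N.choose k : ℝ) * ((N:ℝ) - 2*k)^2) + 2 * (N.choose k : ℝ) := by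
      intro k _; ring
    rw [Finset.sum_congr rfl expand, Finset.sum_add_distrib, Finset.sum_add_distrib,
      ← Finset.mul_sum, ← Finset.mul_sum, ← Finset.mul_sum, moment2, choose_sum]
    nlinarith [ih, pow_pos (show (0:ℝ) < 2 by norm_num) N, Nat.cast_nonneg (α := ℝ) N,
      pow_succ (2:ℝ) N]

lemma moment6 (N : ℕ) :
    ∑ k ∈ Finset.range (N+1), (N.choose k : ℝ) * ((N:ℝ) - 2*k)^6 ≤ 15 * (N:ℝ)^3 * 2^N := by
  induction N with
  | zero => norm_num
  | succ N ih =>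
    have hps := pascal_shift 6 N
    rw [show N+1+1 = N+2 from rfl]
    push_cast
    rw [hps]
    have expand : ∀ k ∈ Finset.range (N+1), (N.choose k : ℝ)
        * ((((N:ℝ) - 2*k) + 1)^6 + (((N:ℝ) - 2*k) - 1)^6)
        = 2 * ((N.choose k : ℝ) * ((N:ℝ) - 2*k)^6)
          + 30 * ((N.choose k : ℝ) * ((N:ℝ) - 2*k)^4)
          + 30 * ((N.choose k : ℝ) * ((N:ℝ) - 2*k)^2) + 2 * (N.choose k : ℝ) := by
      intro k _; ring
    rw [Finset.sum_congr rfl expand, Finset.sum_add_distrib, Finset.sum_add_distrib,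
      Finset.sum_add_distrib, ← Finset.mul_sum, ← Finset.mul_sum, ← Finset.mul_sum,
      ← Finset.mul_sum, moment2, choose_sum, pow_succ (2:ℝ) N]
    nlinarith [ih, moment4 N, pow_pos (show (0:ℝ) < 2 by norm_num) N,
      Nat.cast_nonneg (α := ℝ) N, pow_succ (2:ℝ) N,
      mul_nonneg (Nat.cast_nonneg (α := ℝ) N) (le_of_lt (pow_pos (show (0:ℝ) < 2 by norm_num) N)),
      mul_nonneg (mul_nonneg (Nat.cast_nonneg (α := ℝ) N) (Nat.cast_nonneg (α := ℝ) N)) (le_of_lt (pow_pos (show (0:ℝ) < 2 by norm_num) N))]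

/-- Convert a sum over all subsets (depending only on card) to a binomial sum. -/
lemma sum_subsets_card (n : ℕ) (f : ℕ → ℝ) :
    ∑ S : Finset (Fin n), f S.card
      = ∑ k ∈ Finset.range (n+1), (n.choose k : ℝ) * f k := by
  rw [← Finset.powerset_univ, Finset.sum_powerset]
  rw [Finset.card_univ, Fintype.card_fin]
  refine Finset.sum_congr rfl fun j hj => ?_
  have h : ∀ S ∈ Finset.powersetCard j (Finset.univ : Finset (Fin n)), f S.card = f j := by
    intro S hS
    rw [(Finset.mem_powersetCard.1 hS).2]
  rw [Finset.sum_congr rfl h, Finset.sum_const, Finset.card_powersetCard,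
    Finset.card_univ, Fintype.card_fin, nsmul_eq_mul]

lemma nat_pow4 (n : ℕ) : ((n:ℝ))^4 ≤ 21 * 2^n := by
  have h : n^4 ≤ 21 * 2^n := by
    induction n with
    | zero => norm_num
    | succ n ih =>
      by_cases hn : n < 6
      · interval_cases n <;> norm_num
      · push_neg at hn
        have key : (n+1)^4 ≤ 2 * n^4 := by
          have h1 : 6*n^2 ≤ n^3 := by
            calc 6*n^2 ≤ n*n^2 := Nat.mul_le_mul_right _ hn
              _ = n^3 := by ring
          have h2 : 4*n+1 ≤ n^3 := by nlinarith
          have h3 : 6*n^3 ≤ n^4 := by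
            calc 6*n^3 ≤ n*n^3 := Nat.mul_le_mul_right _ hn
              _ = n^4 := by ring
          calc (n+1)^4 = n^4 + (4*n^3 + 6*n^2 + (4*n+1)) := by ring
            _ ≤ n^4 + (4*n^3 + n^3 + n^3) := by
                refine Nat.add_le_add_left (Nat.add_le_add (Nat.add_le_add_left h1 _) h2) _
            _ = n^4 + 6*n^3 := by ring
            _ ≤ n^4 + n^4 := Nat.add_le_add_left h3 _
            _ = 2 * n^4 := by ring
        calc (n+1)^4 ≤ 2 * n^4 := key
          _ ≤ 2 * (21 * 2^n) := Nat.mul_le_mul_left _ ih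
          _ = 21 * 2^(n+1) := by ring
  calc ((n:ℝ))^4 = ((n^4 : ℕ) : ℝ) := by push_cast; ring
    _ ≤ ((21 * 2^n : ℕ) : ℝ) := by exact_mod_cast h
    _ = 21 * 2^n := by push_cast; ring

/-- Kill odd powers by symmetrization. -/
lemma pair_sum (r : ℝ) (m : ℕ) :
    ∑ l ∈ Finset.Icc 1 (2*m), (r^(l+2) + (-r)^(l+2)) / 2
      = ∑ j ∈ Finset.Icc 1 m, (r^2)^(j+1) := by
  induction m with
  | zero => simp
  | succ m ih =>
    rw [show 2*(m+1) = 2*m+1+1 from by ring]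
    rw [Finset.sum_Icc_succ_top (by omega : 1 ≤ 2*m+1+1),
      Finset.sum_Icc_succ_top (by omega : 1 ≤ 2*m+1),
      Finset.sum_Icc_succ_top (by omega : 1 ≤ m+1), ih]
    have hodd : (-r)^(2*m+1+2) = -(r^(2*m+1+2)) := Odd.neg_pow ⟨m+1, by ring⟩ r
    have heven : (-r)^(2*m+1+1+2) = r^(2*m+1+1+2) := Even.neg_pow ⟨m+2, by ring⟩ r
    rw [hodd, heven]
    ring

lemma card_le (n : ℕ) (S : Finset (Fin n)) : S.card ≤ n := by
  simpa using Finset.card_le_univ S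

lemma lam_compl (n : ℕ) (S : Finset (Fin n)) : lam n Sᶜ = - lam n S := by
  rw [lam, lam, Finset.card_compl, Fintype.card_fin, Nat.cast_sub (card_le n S)]
  rw [show (n:ℝ) - 2*((n:ℝ) - S.card) = -((n:ℝ) - 2*S.card) from by ring, neg_div]

lemma lam_sq_eq (n : ℕ) (hn : 1 ≤ n) (S : Finset (Fin n)) :
    1 - (lam n S)^2 = 4 * (S.card : ℝ) * ((n:ℝ) - S.card) / (n:ℝ)^2 := by
  have hn0 : (n:ℝ) ≠ 0 := Nat.cast_ne_zero.2 (by omega)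
  rw [lam]
  field_simp
  ring

lemma geom_eq (u : ℝ) (m : ℕ) :
    (1-u) * ∑ j ∈ Finset.Icc 1 m, u^(j+1) = u^2 - u^(m+2) := by
  induction m with
  | zero => simp
  | succ m ih =>
    rw [Finset.sum_Icc_succ_top (by omega : 1 ≤ m+1), mul_add, ih]
    ring

/-- The per-subset bound on the inner geometric sum. -/
lemma G_bound (n m : ℕ) (hn : 1 ≤ n) (hm : m ≤ n^2) (S : Finset (Fin n)) :
    ∑ j ∈ Finset.Icc 1 m, ((lam n S)^2)^(j+1)
      ≤ 2*(lam n S)^4 + (n:ℝ)*(lam n S)^6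
        + (if S.card = 0 ∨ S.card = n then ((n:ℝ))^2 else 0) := by
  set r := lam n S with hr
  have hn0 : (0:ℝ) < n := by exact_mod_cast hn
  by_cases hS : S.card = 0 ∨ S.card = n
  · -- boundary case : each term is 1
    have hu : r^2 = 1 := by
      rcases hS with h | h <;>
        · rw [hr, lam, h] <;> push_cast <;> field_simp <;> ring_nf
    rw [if_pos hS]
    have hsum : ∑ j ∈ Finset.Icc 1 m, (r^2)^(j+1) = (m:ℝ) := by
      simp [hu]
    rw [hsum]
    have h1 : (m:ℝ) ≤ (n:ℝ)^2 := by exact_mod_cast hm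
    nlinarith [sq_nonneg (r^2), mul_nonneg hn0.le (sq_nonneg (r^3))]
  · rw [if_neg hS]
    push_neg at hS
    obtain ⟨hs0, hsn⟩ := hS
    have hs1 : (1:ℝ) ≤ (S.card : ℝ) := by exact_mod_cast Nat.one_le_iff_ne_zero.2 hs0
    have hs2 : (S.card : ℝ) ≤ (n:ℝ) - 1 := by
      have : S.card + 1 ≤ n := Nat.succ_le_of_lt (lt_of_le_of_ne (card_le n S) hsn)
      have := (Nat.cast_le (α := ℝ)).2 this
      push_cast at this
      linarith
    set s : ℝ := (S.card : ℝ)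
    set u : ℝ := r^2 with hu
    have hu0 : (0:ℝ) ≤ u := sq_nonneg r
    have h1u : 1 - u = 4 * s * ((n:ℝ) - s) / (n:ℝ)^2 := lam_sq_eq n hn S
    have hsn' : (n:ℝ) - 1 ≤ s * ((n:ℝ) - s) := by
      nlinarith [mul_nonneg (by linarith : (0:ℝ) ≤ s - 1) (by linarith : (0:ℝ) ≤ (n:ℝ) - 1 - s)]
    have h1u_pos : 0 < 1 - u := by
      rw [h1u]
      apply div_pos (by nlinarith) (by positivity)
    have hu1 : u < 1 := by linarith
    -- geometric sum bound
    have hgeom : ∑ j ∈ Finset.Icc 1 m, u^(j+1) ≤ u^2 / (1-u) := by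
      rw [le_div_iff₀ h1u_pos, mul_comm, geom_eq]
      have : (0:ℝ) ≤ u^(m+2) := pow_nonneg hu0 _
      linarith
    refine le_trans hgeom ?_
    have hclaim : u^2 / (1-u) ≤ 2*u^2 + (n:ℝ)*u^3 := by
      rw [div_le_iff₀ h1u_pos]
      by_cases hu2 : u ≤ 1/2
      · nlinarith [mul_nonneg (mul_nonneg hu0 hu0) (by linarith : (0:ℝ) ≤ 1-2*u),
          mul_nonneg (mul_nonneg (mul_nonneg hn0.le hu0) (mul_nonneg hu0 hu0))
            (by linarith : (0:ℝ) ≤ 1-u)]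
      · push_neg at hu2
        have hn2 : (2:ℝ) ≤ n := by linarith
        have hA : (1-u)*(n:ℝ)^2 = 4*s*((n:ℝ)-s) := by
          rw [h1u]; field_simp
        have e0 : 4*((n:ℝ)-1) ≤ (1-u)*(n:ℝ)^2 := by rw [hA]; nlinarith [hsn']
        have e1 : 1 ≤ (n:ℝ)*u*(1-u) := by
          rw [show (n:ℝ)*u*(1-u) = u*((1-u)*(n:ℝ)^2)/n from by field_simp]
          rw [le_div_iff₀ hn0]
          calc (1:ℝ)*n = n := one_mul _
            _ ≤ 2*((n:ℝ)-1) := by linarith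
            _ ≤ u*(4*((n:ℝ)-1)) := by
                nlinarith [mul_nonneg (by linarith : (0:ℝ) ≤ u - 1/2)
                  (by linarith : (0:ℝ) ≤ 4*((n:ℝ)-1))]
            _ ≤ u*((1-u)*(n:ℝ)^2) := mul_le_mul_of_nonneg_left e0 hu0
        nlinarith [mul_nonneg (mul_nonneg hu0 hu0) (by linarith : (0:ℝ) ≤ (n:ℝ)*u*(1-u) - 1),
          mul_nonneg (mul_nonneg hu0 hu0) (by linarith : (0:ℝ) ≤ 1-u)]
    calc u^2/(1-u) ≤ 2*u^2 + (n:ℝ)*u^3 := hclaim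
      _ = 2*r^4 + (n:ℝ)*r^6 + 0 := by rw [hu]; ring


end SRW

/-- There is a constant `0 < c < ∞` such that for all `n ≥ 1`, all `1 ≤ m ≤ n²` and all
`z ∈ V_n`, `∑_{l=1}^{2m} Q_n^{l+2}(z,z) ≤ c/n²`. -/
theorem srw_return_probability_sum : ∃ c : ℝ, 0 < c ∧
    ∀ n : ℕ, 1 ≤ n → ∀ m : ℕ, 1 ≤ m → m ≤ n ^ 2 → ∀ z : V n,
      ∑ l ∈ Finset.Icc 1 (2 * m), (Q n ^ (l + 2)) z z ≤ c / (n : ℝ) ^ 2 := by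
  refine ⟨63, by norm_num, ?_⟩
  intro n hn m hm1 hm2 z
  have hn0 : (0:ℝ) < n := by exact_mod_cast hn
  have hP : (0:ℝ) < 2^n := by positivity
  -- Step 1: spectral representation of the diagonal entries.
  have h1 : ∀ l ∈ Finset.Icc 1 (2*m), (Q n ^ (l+2)) z z
      = ((2:ℝ)^n)⁻¹ * ∑ S : Finset (Fin n), (SRW.lam n S)^(l+2) := by
    intro l _
    rw [SRW.spectral]
    congr 1
    exact Finset.sum_congr rfl fun S _ => by rw [SRW.chi_mul_self, mul_one]
  rw [Finset.sum_congr rfl h1, ← Finset.mul_sum, Finset.sum_comm]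
  -- Step 2: symmetrization kills the odd powers.
  have hsymm : ∑ S : Finset (Fin n), ∑ l ∈ Finset.Icc 1 (2*m), (SRW.lam n S)^(l+2)
      = ∑ S : Finset (Fin n), ∑ l ∈ Finset.Icc 1 (2*m), (-(SRW.lam n S))^(l+2) := by
    apply Fintype.sum_bijective (fun S : Finset (Fin n) => Sᶜ)
      (Function.Involutive.bijective fun S => compl_compl S)
    intro S
    refine Finset.sum_congr rfl fun l _ => ?_
    rw [SRW.lam_compl, neg_neg]
  have hpair : ∑ S : Finset (Fin n), ∑ l ∈ Finset.Icc 1 (2*m), (SRW.lam n S)^(l+2)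
      = ∑ S : Finset (Fin n), ∑ j ∈ Finset.Icc 1 m, ((SRW.lam n S)^2)^(j+1) := by
    have hps : ∀ S : Finset (Fin n), ∑ l ∈ Finset.Icc 1 (2*m),
        ((SRW.lam n S)^(l+2) + (-(SRW.lam n S))^(l+2))/2
        = ∑ j ∈ Finset.Icc 1 m, ((SRW.lam n S)^2)^(j+1) :=
      fun S => SRW.pair_sum (SRW.lam n S) m
    rw [← Finset.sum_congr rfl (fun S _ => hps S)]
    simp only [add_div, Finset.sum_add_distrib, ← Finset.sum_div]
    rw [← hsymm]
    ring
  rw [hpair]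
  -- Step 3: moment bounds.
  have hA : ∑ S : Finset (Fin n), (SRW.lam n S)^4 ≤ 3*2^n/(n:ℝ)^2 := by
    have hc : ∀ S : Finset (Fin n), (SRW.lam n S)^4
        = (fun k : ℕ => (((n:ℝ) - 2*k)/(n:ℝ))^4) S.card := fun S => by rw [SRW.lam]
    calc ∑ S : Finset (Fin n), (SRW.lam n S)^4
        = ∑ k ∈ Finset.range (n+1), (n.choose k : ℝ) * (((n:ℝ) - 2*k)/(n:ℝ))^4 := by
          rw [Finset.sum_congr rfl (fun S _ => hc S)]
          exact SRW.sum_subsets_card n (fun k => (((n:ℝ) - 2*k)/(n:ℝ))^4)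
      _ = (∑ k ∈ Finset.range (n+1), (n.choose k : ℝ) * ((n:ℝ) - 2*k)^4)/(n:ℝ)^4 := by
          rw [Finset.sum_div]
          exact Finset.sum_congr rfl fun k _ => by rw [div_pow]; ring
      _ ≤ (3*(n:ℝ)^2*2^n)/(n:ℝ)^4 := by
          apply div_le_div_of_nonneg_right (SRW.moment4 n) (by positivity)
      _ = 3*2^n/(n:ℝ)^2 := by field_simp
  have hB : ∑ S : Finset (Fin n), (SRW.lam n S)^6 ≤ 15*2^n/(n:ℝ)^3 := by
    have hc : ∀ S : Finset (Fin n), (SRW.lam n S)^6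
        = (fun k : ℕ => (((n:ℝ) - 2*k)/(n:ℝ))^6) S.card := fun S => by rw [SRW.lam]
    calc ∑ S : Finset (Fin n), (SRW.lam n S)^6
        = ∑ k ∈ Finset.range (n+1), (n.choose k : ℝ) * (((n:ℝ) - 2*k)/(n:ℝ))^6 := by
          rw [Finset.sum_congr rfl (fun S _ => hc S)]
          exact SRW.sum_subsets_card n (fun k => (((n:ℝ) - 2*k)/(n:ℝ))^6)
      _ = (∑ k ∈ Finset.range (n+1), (n.choose k : ℝ) * ((n:ℝ) - 2*k)^6)/(n:ℝ)^6 := by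
          rw [Finset.sum_div]
          exact Finset.sum_congr rfl fun k _ => by rw [div_pow]; ring
      _ ≤ (15*(n:ℝ)^3*2^n)/(n:ℝ)^6 := by
          apply div_le_div_of_nonneg_right (SRW.moment6 n) (by positivity)
      _ = 15*2^n/(n:ℝ)^3 := by field_simp
  -- Step 4: sum the per-subset bounds.
  have hind : ∑ S : Finset (Fin n),
      (if S.card = 0 ∨ S.card = n then ((n:ℝ))^2 else 0) ≤ 2*(n:ℝ)^2 := by
    have hpt : ∀ S ∈ (Finset.univ : Finset (Finset (Fin n))),
        (if S.card = 0 ∨ S.card = n then ((n:ℝ))^2 else 0)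
          ≤ (if S = ∅ then ((n:ℝ))^2 else 0) + (if S = Finset.univ then ((n:ℝ))^2 else 0) := by
      intro S _
      by_cases h : S.card = 0 ∨ S.card = n
      · rw [if_pos h]
        rcases h with h | h
        · rw [Finset.card_eq_zero] at h
          rw [if_pos h]
          have : (0:ℝ) ≤ if S = Finset.univ then ((n:ℝ))^2 else 0 := by positivity
          linarith
        · have hu : S = Finset.univ := by
            apply Finset.eq_univ_of_card
            rw [h, Fintype.card_fin]
          rw [if_pos hu]
          have : (0:ℝ) ≤ if S = ∅ then ((n:ℝ))^2 else 0 := by positivity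
          linarith
      · rw [if_neg h]
        have h1 : (0:ℝ) ≤ if S = ∅ then ((n:ℝ))^2 else 0 := by positivity
        have h2 : (0:ℝ) ≤ if S = Finset.univ then ((n:ℝ))^2 else 0 := by positivity
        linarith
    calc ∑ S : Finset (Fin n), (if S.card = 0 ∨ S.card = n then ((n:ℝ))^2 else 0)
        ≤ ∑ S : Finset (Fin n), ((if S = ∅ then ((n:ℝ))^2 else 0)
            + (if S = Finset.univ then ((n:ℝ))^2 else 0)) := Finset.sum_le_sum hpt
      _ = (n:ℝ)^2 + (n:ℝ)^2 := by
          rw [Finset.sum_add_distrib, Finset.sum_ite_eq' Finset.univ ∅ (fun _ => ((n:ℝ))^2),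
            Finset.sum_ite_eq' Finset.univ Finset.univ (fun _ => ((n:ℝ))^2)]
          simp
      _ = 2*(n:ℝ)^2 := by ring
  have hGsum : ∑ S : Finset (Fin n), ∑ j ∈ Finset.Icc 1 m, ((SRW.lam n S)^2)^(j+1)
      ≤ 2*(∑ S : Finset (Fin n), (SRW.lam n S)^4)
        + (n:ℝ)*(∑ S : Finset (Fin n), (SRW.lam n S)^6) + 2*(n:ℝ)^2 := by
    calc ∑ S : Finset (Fin n), ∑ j ∈ Finset.Icc 1 m, ((SRW.lam n S)^2)^(j+1)
        ≤ ∑ S : Finset (Fin n), (2*(SRW.lam n S)^4 + (n:ℝ)*(SRW.lam n S)^6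
            + (if S.card = 0 ∨ S.card = n then ((n:ℝ))^2 else 0)) :=
          Finset.sum_le_sum fun S _ => SRW.G_bound n m hn hm2 S
      _ = 2*(∑ S : Finset (Fin n), (SRW.lam n S)^4)
            + (n:ℝ)*(∑ S : Finset (Fin n), (SRW.lam n S)^6)
            + ∑ S : Finset (Fin n), (if S.card = 0 ∨ S.card = n then ((n:ℝ))^2 else 0) := by
          rw [Finset.sum_add_distrib, Finset.sum_add_distrib, ← Finset.mul_sum, ← Finset.mul_sum]
      _ ≤ _ := by linarith [hind]
  -- Step 5: numerics.
  have h42 : 2*(n:ℝ)^2/2^n ≤ 42/(n:ℝ)^2 := by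
    rw [div_le_div_iff₀ hP (by positivity)]
    nlinarith [SRW.nat_pow4 n]
  calc ((2:ℝ)^n)⁻¹ * ∑ S : Finset (Fin n), ∑ j ∈ Finset.Icc 1 m, ((SRW.lam n S)^2)^(j+1)
      ≤ ((2:ℝ)^n)⁻¹ * (2*(3*2^n/(n:ℝ)^2) + (n:ℝ)*(15*2^n/(n:ℝ)^3) + 2*(n:ℝ)^2) := by
        apply mul_le_mul_of_nonneg_left _ (by positivity)
        refine le_trans hGsum ?_
        have hnB : (n:ℝ)*(∑ S : Finset (Fin n), (SRW.lam n S)^6)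
            ≤ (n:ℝ)*(15*2^n/(n:ℝ)^3) := mul_le_mul_of_nonneg_left hB hn0.le
        linarith [hA]
    _ = 21/(n:ℝ)^2 + 2*(n:ℝ)^2/2^n := by field_simp; ring
    _ ≤ 21/(n:ℝ)^2 + 42/(n:ℝ)^2 := by linarith [h42]
    _ = 63/(n:ℝ)^2 := by ring
end
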